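/- arXiv:2208.10141 — 2 statements merged into one kernel-verified Lean document; each statement's English description precedes it below -/
import Mathlib

section
/- For every m ∈ ℝ and 0 < ρ ≤ 1/μ, with N₀ := 1/μ₀ − ρ, one has the inclusions S^{m−N₀}_{ρ,Λ}(𝕋 × ℤ) ⊂ M^m_{ρ,Λ}(𝕋 × ℤ) ⊂ S^m_{ρ,Λ}(𝕋 × ℤ). -/
open MeasureTheory Complex Filter AddCircle
open scoped Real ENNReal ComplexConjugate

noncomputable section

/-- the one-dimensional torus, as `ℝ / 2πℤ`. -/
abbrev 𝕋 := AddCircle (2 * Real.pi)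

instance : Fact (0 < 2 * Real.pi) := ⟨by positivity⟩

/-- normalized Haar measure on `𝕋`. -/
abbrev haarT : Measure 𝕋 := @haarAddCircle (2 * Real.pi) _

/-- `L²(𝕋)`. -/
abbrev L2T := Lp ℂ 2 haarT

/-- `ℓ²(ℤ)`. -/
abbrev ell2 := lp (fun _ : ℤ => ℂ) 2

/-- the unitary Fourier transform `ℱ_ℤ : ℓ²(ℤ) → L²(𝕋)`, sending `(a k)` to `∑ a k e^{ikx}`. -/
def FZ : ell2 ≃ₗᵢ[ℂ] L2T := (@fourierBasis (2 * Real.pi) _).repr.symm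

/-- forward difference operator `Δ` on functions on `ℤ`. -/
def fdiff {E : Type*} [AddCommGroup E] (f : ℤ → E) : ℤ → E := fun k => f (k + 1) - f k

/-- `Λ` is a weight function with exponents `0 < μ₀ ≤ μ₁`:
`C₀ (1+|k|)^{μ₀} ≤ Λ(k) ≤ C₁ (1+|k|)^{μ₁}`. -/
def IsWeight (Λ : ℤ → ℝ) (μ₀ μ₁ : ℝ) : Prop :=
  0 < μ₀ ∧ μ₀ ≤ μ₁ ∧ (∀ k, 0 < Λ k) ∧
    ∃ C₀ > (0:ℝ), ∃ C₁ > (0:ℝ), ∀ k : ℤ,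
      C₀ * (1 + |(k : ℝ)|) ^ μ₀ ≤ Λ k ∧ Λ k ≤ C₁ * (1 + |(k : ℝ)|) ^ μ₁

/-- the difference estimates `|k^γ Δ^{α+γ} Λ(k)| ≤ C_{α,γ} Λ(k)^{1-α/μ}`, `γ ∈ {0,1}`. -/
def WeightDiffEst (Λ : ℤ → ℝ) (μ : ℝ) : Prop :=
  ∀ α γ : ℕ, γ ≤ 1 → ∃ C > (0:ℝ), ∀ k : ℤ,
    |(k : ℝ) ^ γ * fdiff^[α + γ] Λ k| ≤ C * Λ k ^ (1 - (α : ℝ) / μ)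

/-- the weighted symbol class `S^m_{ρ,Λ}(𝕋 × ℤ)`:
`σ(·,k)` smooth and `|Δ_k^α ∂_x^β σ(x,k)| ≤ C_{α,β} Λ(k)^{m - ρα}`. -/
def SClass (Λ : ℤ → ℝ) (ρ m : ℝ) (σ : 𝕋 → ℤ → ℂ) : Prop :=
  (∀ k : ℤ, ContDiff ℝ (⊤ : ℕ∞) (fun x : ℝ => σ x k)) ∧
    ∀ α β : ℕ, ∃ C > (0:ℝ), ∀ (x : ℝ) (k : ℤ),
      ‖fdiff^[α] (fun j => iteratedDeriv β (fun y : ℝ => σ y j) x) k‖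
        ≤ C * Λ k ^ (m - ρ * α)

/-- the weighted symbol class `M^m_{ρ,Λ}(𝕋 × ℤ)`:
`k^γ Δ_k^γ σ ∈ S^m_{ρ,Λ}(𝕋 × ℤ)` for `γ ∈ {0,1}`. -/
def MClass (Λ : ℤ → ℝ) (ρ m : ℝ) (σ : 𝕋 → ℤ → ℂ) : Prop :=
  ∀ γ : ℕ, γ ≤ 1 →
    SClass Λ ρ m (fun x k => (k : ℂ) ^ γ * fdiff^[γ] (fun j => σ x j) k)

/-- the periodic pseudo-differential operator with symbol `σ`, acting pointwise:
`(T_σ u)(x) = ∑_k e^{ikx} σ(x,k) û(k)`. -/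
def TOp (σ : 𝕋 → ℤ → ℂ) (u : 𝕋 → ℂ) (x : 𝕋) : ℂ :=
  ∑' k : ℤ, fourier k x * σ x k * fourierCoeff u k

/-- the weighted symbol class `S^m_{ρ,Λ}(ℤ × 𝕋)`. -/
def SClassZ (Λ : ℤ → ℝ) (ρ m : ℝ) (σ : ℤ → 𝕋 → ℂ) : Prop :=
  (∀ k : ℤ, ContDiff ℝ (⊤ : ℕ∞) (fun x : ℝ => σ k x)) ∧
    ∀ α β : ℕ, ∃ C > (0:ℝ), ∀ (k : ℤ) (x : ℝ),
      ‖fdiff^[α] (fun j => iteratedDeriv β (fun y : ℝ => σ j y) x) k‖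
        ≤ C * Λ k ^ (m - ρ * α)

/-- the weighted symbol class `M^m_{ρ,Λ}(ℤ × 𝕋)`. -/
def MClassZ (Λ : ℤ → ℝ) (ρ m : ℝ) (σ : ℤ → 𝕋 → ℂ) : Prop :=
  ∀ γ : ℕ, γ ≤ 1 →
    SClassZ Λ ρ m (fun k x => (k : ℂ) ^ γ * fdiff^[γ] (fun j => σ j x) k)

/-- the discrete pseudo-differential operator with symbol `σ`, acting pointwise on the
Fourier side: `(T_σ f)(k) = ∫_𝕋 e^{ikx} σ(k,x) g(x) dx`. -/
def TOpZ (σ : ℤ → 𝕋 → ℂ) (g : 𝕋 → ℂ) (k : ℤ) : ℂ :=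
  ∫ x : 𝕋, fourier k x * σ k x * g x ∂haarT


lemma iterDeriv_sub {f g : ℝ → ℂ} (n : ℕ) (hf : ContDiff ℝ (n:ℕ∞) f) (hg : ContDiff ℝ (n:ℕ∞) g)
    (x : ℝ) :
    iteratedDeriv n (fun y => f y - g y) x = iteratedDeriv n f x - iteratedDeriv n g x := by
  rw [show (fun y => f y - g y) = f - g from rfl]
  simp only [← iteratedDerivWithin_univ]
  exact iteratedDerivWithin_sub (Set.mem_univ x) uniqueDiffOn_univ hf.contDiffWithinAt hg.contDiffWithinAt

lemma iterDeriv_cmul (c : ℂ) {f : ℝ → ℂ} (n : ℕ) (hf : ContDiff ℝ (n:ℕ∞) f) (x : ℝ) :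
    iteratedDeriv n (fun y => c * f y) x = c * iteratedDeriv n f x := by
  rw [show (fun y => c * f y) = c • f from rfl]
  simp only [← iteratedDerivWithin_univ]
  have := iteratedDerivWithin_const_smul (Set.mem_univ x) uniqueDiffOn_univ c hf.contDiffWithinAt
  simpa using this

lemma fdiff_shift {E : Type*} [AddCommGroup E] (f : ℤ → E) (n : ℕ) (k : ℤ) :
    fdiff^[n] f (k + 1) = fdiff^[n] f k + fdiff^[n + 1] f k := by
  rw [Function.iterate_succ_apply']
  show _ = fdiff^[n] f k + (fdiff^[n] f (k+1) - fdiff^[n] f k)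
  abel

lemma fdiff_comp (f : ℤ → ℂ) (n : ℕ) : fdiff^[n] (fdiff f) = fdiff^[n+1] f :=
  (Function.iterate_succ_apply fdiff n f).symm

lemma fdiff_mul_cast (f : ℤ → ℂ) : ∀ (α : ℕ) (k : ℤ),
    fdiff^[α + 1] (fun j => (j : ℂ) * f j) k
      = (k : ℂ) * fdiff^[α + 1] f k + ((α : ℂ) + 1) * fdiff^[α] f (k + 1) := by
  intro α
  induction α with
  | zero =>
    intro k
    simp only [Nat.cast_zero, zero_add, Function.iterate_one, Function.iterate_zero, id_eq,
      one_mul, fdiff]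
    push_cast
    ring
  | succ n ih =>
    intro k
    have e1 : ∀ (g : ℤ → ℂ) (j : ℤ), fdiff^[n + 1 + 1] g j
        = fdiff^[n + 1] g (j + 1) - fdiff^[n + 1] g j := by
      intro g j; rw [Function.iterate_succ_apply']; rfl
    rw [e1, ih, ih, e1 f k,
      show fdiff^[n + 1] f (k + 1) = fdiff^[n] f (k + 1 + 1) - fdiff^[n] f (k + 1) by
        rw [Function.iterate_succ_apply']; rfl]
    push_cast
    ring


theorem stmt2 (Λ : ℤ → ℝ) (μ₀ μ₁ μ : ℝ)
    (hw : IsWeight Λ μ₀ μ₁) (hμ : μ₁ ≤ μ) (hde : WeightDiffEst Λ μ)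
    (ρ : ℝ) (hρ₁ : 0 < ρ) (hρ₂ : ρ ≤ 1 / μ) (m : ℝ) :
    (∀ σ : 𝕋 → ℤ → ℂ, SClass Λ ρ (m - (1 / μ₀ - ρ)) σ → MClass Λ ρ m σ) ∧
    (∀ σ : 𝕋 → ℤ → ℂ, MClass Λ ρ m σ → SClass Λ ρ m σ) := by
  
  obtain ⟨hμ₀, hμ₀₁, hΛpos, C₀, hC₀, C₁, hC₁, hbnd⟩ := hw
  have hμpos : 0 < μ := lt_of_lt_of_le hμ₀ (hμ₀₁.trans hμ)
  have hρμ₀ : ρ ≤ 1 / μ₀ := hρ₂.trans (one_div_le_one_div_of_le hμ₀ (hμ₀₁.trans hμ))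
  have hΛlb : ∀ k : ℤ, C₀ ≤ Λ k := by
    intro k
    have h1 : (1:ℝ) ≤ (1 + |(k:ℝ)|) ^ μ₀ :=
      Real.one_le_rpow (by linarith [abs_nonneg (k:ℝ)]) hμ₀.le
    nlinarith [(hbnd k).1]
  have hmono : ∀ a b : ℝ, a ≤ b → ∀ k : ℤ, Λ k ^ a ≤ C₀ ^ (a - b) * Λ k ^ b := by
    intro a b hab k
    have h1 : Λ k ^ a = Λ k ^ (a - b) * Λ k ^ b := by
      rw [← Real.rpow_add (hΛpos k)]; ring_nf
    rw [h1]
    exact mul_le_mul_of_nonneg_right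
      (Real.rpow_le_rpow_of_nonpos hC₀ (hΛlb k) (by linarith))
      (Real.rpow_nonneg (hΛpos k).le b)
  have habs : ∀ k : ℤ, |(k:ℝ)| ≤ C₀ ^ (-(1/μ₀)) * Λ k ^ (1/μ₀) := by
    intro k
    have h2 : (1 + |(k:ℝ)|) ^ μ₀ ≤ C₀⁻¹ * Λ k := by
      rw [inv_mul_eq_div, le_div_iff₀ hC₀]
      nlinarith [(hbnd k).1]
    have h3 := Real.rpow_le_rpow (by positivity) h2 (by positivity : (0:ℝ) ≤ 1/μ₀)
    rw [← Real.rpow_mul (by positivity), mul_one_div, div_self hμ₀.ne', Real.rpow_one,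
      Real.mul_rpow (inv_nonneg.2 hC₀.le) (hΛpos k).le, Real.inv_rpow hC₀.le,
      ← Real.rpow_neg hC₀.le] at h3
    have : |(k:ℝ)| ≤ 1 + |(k:ℝ)| := by linarith [abs_nonneg (k:ℝ)]
    linarith
  constructor
  · intro σ hσ γ hγ
    interval_cases γ
    · -- γ = 0
      simp only [pow_zero, one_mul, Function.iterate_zero, id_eq]
      refine ⟨hσ.1, ?_⟩
      intro α β
      obtain ⟨C, hC, hb⟩ := hσ.2 α β
      refine ⟨C * C₀ ^ (-(1/μ₀ - ρ)), by positivity, ?_⟩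
      intro x k
      refine le_trans (hb x k) ?_
      have h := hmono (m - (1/μ₀ - ρ) - ρ * α) (m - ρ * α) (by linarith) k
      rw [show m - (1/μ₀ - ρ) - ρ * (α:ℝ) - (m - ρ * (α:ℝ)) = -(1/μ₀ - ρ) by ring] at h
      rw [mul_assoc]
      exact mul_le_mul_of_nonneg_left h hC.le
    · -- γ = 1
      refine ⟨?_, ?_⟩
      · intro k
        exact contDiff_const.mul ((hσ.1 (k+1)).sub (hσ.1 k))
      · intro α β
        obtain ⟨C1, hC1, hb1⟩ := hσ.2 (α+1) β
        obtain ⟨C2, hC2, hb2⟩ := hσ.2 α β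
        refine ⟨C₀ ^ (-(1/μ₀)) * C1
          + (α:ℝ) * (C₀ ^ (-(1/μ₀ - ρ)) * C2 + C₀ ^ (-(1/μ₀ - ρ) - ρ) * C1) + 1,
          by positivity, ?_⟩
        intro x k
        set Fx : ℤ → ℂ := fun j => iteratedDeriv β (fun y : ℝ => σ y j) x with hFx
        have hrw : (fun j : ℤ =>
              iteratedDeriv β (fun y : ℝ => (j:ℂ) ^ 1 * fdiff^[1] (fun i => σ y i) j) x)
            = fun j : ℤ => (j:ℂ) * fdiff Fx j := by
          funext j
          have h1 : (fun y : ℝ => (j:ℂ) ^ 1 * fdiff^[1] (fun i => σ y i) j)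
              = fun y : ℝ => (j:ℂ) * ((fun y : ℝ => σ y (j+1)) y - (fun y : ℝ => σ y j) y) := by
            funext y; simp [fdiff]
          rw [h1, iterDeriv_cmul _ β (((hσ.1 (j+1)).sub (hσ.1 j)).of_le (by exact_mod_cast le_top)),
            iterDeriv_sub β ((hσ.1 (j+1)).of_le (by exact_mod_cast le_top)) ((hσ.1 j).of_le (by exact_mod_cast le_top))]
          rfl
        rw [show (fun j : ℤ =>
              iteratedDeriv β (fun y : ℝ => (j:ℂ) ^ 1 * fdiff^[1] (fun i => σ y i) j) x)
            = fun j : ℤ => (j:ℂ) * fdiff Fx j from hrw]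
        have hval : fdiff^[α] (fun j => (j:ℂ) * fdiff Fx j) k
            = (k:ℂ) * fdiff^[α+1] Fx k + (α:ℂ) * (fdiff^[α] Fx k + fdiff^[α+1] Fx k) := by
          cases α with
          | zero => simp [Function.iterate_one]
          | succ a =>
            rw [fdiff_mul_cast (fdiff Fx) a k, fdiff_comp, fdiff_comp, fdiff_shift]
            push_cast
            ring
        rw [hval]
        have h1 : ‖fdiff^[α+1] Fx k‖ ≤ C1 * Λ k ^ (m - (1/μ₀ - ρ) - ρ * (α + 1 : ℕ)) := hb1 x k
        have h2 : ‖fdiff^[α] Fx k‖ ≤ C2 * Λ k ^ (m - (1/μ₀ - ρ) - ρ * α) := hb2 x k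
        have hk := habs k
        have hnorm : ‖(k:ℂ) * fdiff^[α+1] Fx k + (α:ℂ) * (fdiff^[α] Fx k + fdiff^[α+1] Fx k)‖
            ≤ |(k:ℝ)| * ‖fdiff^[α+1] Fx k‖
              + (α:ℝ) * (‖fdiff^[α] Fx k‖ + ‖fdiff^[α+1] Fx k‖) := by
          refine le_trans (norm_add_le _ _) ?_
          rw [norm_mul, norm_mul, Complex.norm_intCast, Complex.norm_natCast]
          exact add_le_add le_rfl
            (mul_le_mul_of_nonneg_left (norm_add_le _ _) (Nat.cast_nonneg α))
        have hprod : Λ k ^ (1/μ₀) * Λ k ^ (m - (1/μ₀ - ρ) - ρ * (α + 1 : ℕ))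
            = Λ k ^ (m - ρ * α) := by
          rw [← Real.rpow_add (hΛpos k)]
          congr 1
          push_cast
          ring
        have t1 : |(k:ℝ)| * ‖fdiff^[α+1] Fx k‖
            ≤ (C₀ ^ (-(1/μ₀)) * C1) * Λ k ^ (m - ρ * α) := by
          calc |(k:ℝ)| * ‖fdiff^[α+1] Fx k‖
              ≤ (C₀ ^ (-(1/μ₀)) * Λ k ^ (1/μ₀))
                * (C1 * Λ k ^ (m - (1/μ₀ - ρ) - ρ * (α + 1 : ℕ))) :=
                mul_le_mul hk h1 (norm_nonneg _) (mul_nonneg (Real.rpow_nonneg hC₀.le _) (Real.rpow_nonneg (hΛpos k).le _))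
            _ = (C₀ ^ (-(1/μ₀)) * C1)
                * (Λ k ^ (1/μ₀) * Λ k ^ (m - (1/μ₀ - ρ) - ρ * (α + 1 : ℕ))) := by ring
            _ = _ := by rw [hprod]
        have hm0 := hmono (m - (1/μ₀ - ρ) - ρ * α) (m - ρ * α) (by linarith) k
        rw [show m - (1/μ₀ - ρ) - ρ * (α:ℝ) - (m - ρ * (α:ℝ)) = -(1/μ₀ - ρ) by ring] at hm0
        have hm1 := hmono (m - (1/μ₀ - ρ) - ρ * (α + 1 : ℕ)) (m - ρ * α)
          (by push_cast; nlinarith) k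
        rw [show m - (1/μ₀ - ρ) - ρ * ((α + 1 : ℕ):ℝ) - (m - ρ * (α:ℝ)) = -(1/μ₀ - ρ) - ρ by
          push_cast; ring] at hm1
        have e0le : ‖fdiff^[α] Fx k‖ ≤ C₀ ^ (-(1/μ₀ - ρ)) * C2 * Λ k ^ (m - ρ * α) := by
          refine le_trans h2 ?_
          calc C2 * Λ k ^ (m - (1/μ₀ - ρ) - ρ * α)
              ≤ C2 * (C₀ ^ (-(1/μ₀ - ρ)) * Λ k ^ (m - ρ * α)) :=
                mul_le_mul_of_nonneg_left hm0 hC2.le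
            _ = _ := by ring
        have e1le : ‖fdiff^[α+1] Fx k‖
            ≤ C₀ ^ (-(1/μ₀ - ρ) - ρ) * C1 * Λ k ^ (m - ρ * α) := by
          refine le_trans h1 ?_
          calc C1 * Λ k ^ (m - (1/μ₀ - ρ) - ρ * (α + 1 : ℕ))
              ≤ C1 * (C₀ ^ (-(1/μ₀ - ρ) - ρ) * Λ k ^ (m - ρ * α)) :=
                mul_le_mul_of_nonneg_left hm1 hC1.le
            _ = _ := by ring
        have t2 : (α:ℝ) * (‖fdiff^[α] Fx k‖ + ‖fdiff^[α+1] Fx k‖)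
            ≤ ((α:ℝ) * (C₀ ^ (-(1/μ₀ - ρ)) * C2 + C₀ ^ (-(1/μ₀ - ρ) - ρ) * C1))
              * Λ k ^ (m - ρ * α) := by
          calc (α:ℝ) * (‖fdiff^[α] Fx k‖ + ‖fdiff^[α+1] Fx k‖)
              ≤ (α:ℝ) * (C₀ ^ (-(1/μ₀ - ρ)) * C2 * Λ k ^ (m - ρ * α)
                + C₀ ^ (-(1/μ₀ - ρ) - ρ) * C1 * Λ k ^ (m - ρ * α)) :=
                mul_le_mul_of_nonneg_left (add_le_add e0le e1le) (Nat.cast_nonneg α)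
            _ = _ := by ring
        have hlam : (0:ℝ) ≤ Λ k ^ (m - ρ * (α:ℝ)) := Real.rpow_nonneg (hΛpos k).le _
        refine le_trans hnorm ?_
        rw [show (C₀ ^ (-(1/μ₀)) * C1
            + (α:ℝ) * (C₀ ^ (-(1/μ₀ - ρ)) * C2 + C₀ ^ (-(1/μ₀ - ρ) - ρ) * C1) + 1)
              * Λ k ^ (m - ρ * (α:ℝ))
          = C₀ ^ (-(1/μ₀)) * C1 * Λ k ^ (m - ρ * (α:ℝ))
            + (α:ℝ) * (C₀ ^ (-(1/μ₀ - ρ)) * C2 + C₀ ^ (-(1/μ₀ - ρ) - ρ) * C1)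
              * Λ k ^ (m - ρ * (α:ℝ)) + Λ k ^ (m - ρ * (α:ℝ)) from by ring]
        linarith
  · intro σ h
    have h0 := h 0 (by norm_num)
    simp only [pow_zero, one_mul, Function.iterate_zero, id_eq] at h0
    exact h0
end
end

section
/- In the proof of Gohberg's lemma: let σ ∈ M^0_{ρ,Λ}(𝕋 × ℤ), let (x_{k_m}, k_m) be a sequence in 𝕋 × ℤ with |k_m| → ∞, let u ∈ C^∞(𝕋), and define u_{k_m}(x) = e^{i k_m x} u(x − x_{k_m}). Then ‖σ(·, k_m) u_{k_m} − T_σ u_{k_m}‖_{L²(𝕋)} → 0 as m → ∞. -/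
open MeasureTheory Complex Filter AddCircle
open scoped Real ENNReal ComplexConjugate

noncomputable section

section Aux

lemma fourier_pt_add (m : ℤ) (x y : 𝕋) :
    fourier m (x + y) = fourier m x * fourier m y := by
  simp only [fourier_apply, smul_add, AddCircle.toCircle_add, Circle.coe_mul]

lemma norm_fourier_apply (n : ℤ) (x : 𝕋) : ‖fourier n x‖ = 1 :=
  Circle.norm_coe _

lemma continuous_tor {f : 𝕋 → ℂ} (h : Continuous fun x : ℝ => f x) : Continuous f :=
  (QuotientAddGroup.isQuotientMap_mk _).continuous_iff.mpr h

lemma fourierCoeff_norm_le {f : 𝕋 → ℂ} {M : ℝ} (hM : ∀ x, ‖f x‖ ≤ M) (n : ℤ) :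
    ‖fourierCoeff f n‖ ≤ M := by
  have h : ‖∫ t : 𝕋, fourier (-n) t • f t ∂haarT‖ ≤ M * (haarT Set.univ).toReal := by
    refine norm_integral_le_of_norm_le_const ?_
    filter_upwards with t
    rw [norm_smul, norm_fourier_apply, one_mul]
    exact hM t
  simpa [fourierCoeff, measure_univ] using h

/-- one integration by parts step for Fourier coefficients of a smooth function on `𝕋`. -/
lemma fourierCoeff_step {f : 𝕋 → ℂ} (hf : ContDiff ℝ (⊤:ℕ∞) fun x : ℝ => f x) :
    ∃ g : 𝕋 → ℂ, ContDiff ℝ (⊤:ℕ∞) (fun x : ℝ => g x) ∧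
      ∀ n : ℤ, n ≠ 0 → ‖fourierCoeff f n‖ = ‖fourierCoeff g n‖ / |(n : ℝ)| := by
  have hT0 : (0:ℝ) < 2 * Real.pi := by positivity
  set F : ℝ → ℂ := fun x => f x with hFdef
  have hFper : Function.Periodic F (2 * Real.pi) := by
    intro x
    show f _ = f _
    rw [AddCircle.coe_add_period]
  have hFd : Differentiable ℝ F := hf.differentiable (by simp)
  have hF' : ContDiff ℝ (⊤:ℕ∞) (deriv F) := (contDiff_infty_iff_deriv.mp hf).2
  have hDper : Function.Periodic (deriv F) (2 * Real.pi) := by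
    intro x
    have h1 : (fun y => F (y + 2 * Real.pi)) = F := funext fun y => hFper y
    have h2 : deriv (fun y => F (y + 2 * Real.pi)) x = deriv F (x + 2 * Real.pi) :=
      deriv_comp_add_const F (2 * Real.pi) x
    rw [h1] at h2
    exact h2.symm
  refine ⟨hDper.lift, ?_, ?_⟩
  · have h1 : (fun x : ℝ => hDper.lift ↑x) = deriv F :=
      funext fun x => hDper.lift_coe x
    rw [h1]; exact hF'
  intro n hn
  have hg : ∀ x : ℝ, hDper.lift ↑x = deriv F x := fun x => hDper.lift_coe x
  -- express both coefficients as interval integrals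
  have hcf : fourierCoeff f n
      = (1 / (2 * Real.pi)) • ∫ x in (0:ℝ)..(2 * Real.pi), fourier (-n) (↑x : 𝕋) • F x := by
    simpa using fourierCoeff_eq_intervalIntegral f n 0
  have hcg : fourierCoeff hDper.lift n
      = (1 / (2 * Real.pi)) • ∫ x in (0:ℝ)..(2 * Real.pi), fourier (-n) (↑x : 𝕋) • deriv F x := by
    have h0 := fourierCoeff_eq_intervalIntegral hDper.lift n 0
    simp only [zero_add] at h0
    refine h0.trans ?_
    have he : (fun x : ℝ => fourier (-n) (↑x : 𝕋) • hDper.lift ↑x)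
        = (fun x : ℝ => fourier (-n) (↑x : 𝕋) • deriv F x) := by
      funext x; rw [hg x]
    rw [he]
  set c : ℂ := (2 * Real.pi : ℝ) / (-2 * Real.pi * Complex.I * n) with hcdef
  have hA : ∀ x : ℝ, HasDerivAt (fun y : ℝ => c * fourier (-n) (↑y : 𝕋)) (fourier (-n) (↑x : 𝕋)) x :=
    fun x => has_antideriv_at_fourier_neg ⟨hT0⟩ hn x
  have hu'int : IntervalIntegrable (fun y : ℝ => fourier (-n) (↑y : 𝕋)) MeasureTheory.volume 0 (2 * Real.pi) :=
    (((fourier (-n)).continuous).comp (AddCircle.continuous_mk' _)).intervalIntegrable _ _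
  have hv'int : IntervalIntegrable (deriv F) MeasureTheory.volume 0 (2 * Real.pi) :=
    (hF'.continuous).intervalIntegrable _ _
  have hparts := intervalIntegral.integral_mul_deriv_eq_deriv_mul
      (u := fun y : ℝ => c * fourier (-n) (↑y : 𝕋)) (u' := fun y : ℝ => fourier (-n) (↑y : 𝕋))
      (v := F) (v' := deriv F) (a := 0) (b := 2 * Real.pi)
      (fun x _ => hA x) (fun x _ => (hFd x).hasDerivAt) hu'int hv'int
  have hbd : (c * fourier (-n) (↑(2 * Real.pi) : 𝕋)) * F (2 * Real.pi)
      - (c * fourier (-n) (↑(0:ℝ) : 𝕋)) * F 0 = 0 := by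
    have h1 : ((2 * Real.pi : ℝ) : 𝕋) = ((0:ℝ) : 𝕋) := by
      simpa using AddCircle.coe_add_period (2 * Real.pi) 0
    have h2 : F (2 * Real.pi) = F 0 := by simpa using hFper 0
    rw [h1, h2]; ring
  rw [hbd] at hparts
  -- hparts : ∫ x in 0..2π, (c * fourier (-n) x) * deriv F x = 0 - ∫ x in 0..2π, fourier (-n) x * F x
  have hI : ∫ x in (0:ℝ)..(2 * Real.pi), fourier (-n) (↑x : 𝕋) • F x
      = -c * ∫ x in (0:ℝ)..(2 * Real.pi), fourier (-n) (↑x : 𝕋) • deriv F x := by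
    have h3 : ∫ x in (0:ℝ)..(2 * Real.pi), (c * fourier (-n) (↑x : 𝕋)) * deriv F x
        = c * ∫ x in (0:ℝ)..(2 * Real.pi), fourier (-n) (↑x : 𝕋) * deriv F x := by
      rw [← intervalIntegral.integral_const_mul]
      refine intervalIntegral.integral_congr fun x _ => ?_
      ring
    rw [h3] at hparts
    simp only [smul_eq_mul]
    rw [zero_sub] at hparts
    have := congrArg Neg.neg hparts
    rw [neg_neg] at this
    rw [← this]; ring
  have hrel : fourierCoeff f n = -c * fourierCoeff hDper.lift n := by
    rw [hcf, hcg, hI]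
    exact (mul_smul_comm _ _ _).symm
  rw [hrel, norm_mul]
  have hnc : ‖-c‖ = 1 / |(n:ℝ)| := by
    rw [norm_neg, hcdef, norm_div]
    have hnum : ‖((2 * Real.pi : ℝ) : ℂ)‖ = 2 * Real.pi := by
      rw [Complex.norm_real, Real.norm_eq_abs, abs_of_pos hT0]
    have hden : ‖(-2 * (Real.pi:ℂ) * Complex.I * (n:ℂ))‖ = 2 * Real.pi * |(n:ℝ)| := by
      rw [norm_mul, norm_mul, norm_mul, Complex.norm_I]
      have e1 : ‖(-2 : ℂ)‖ = 2 := by norm_num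
      have e2 : ‖((Real.pi : ℝ) : ℂ)‖ = Real.pi := by
        rw [Complex.norm_real, Real.norm_eq_abs, _root_.abs_of_pos Real.pi_pos]
      have e3 : ‖((n : ℤ) : ℂ)‖ = |(n:ℝ)| := by
        have h4 : ((n:ℤ):ℂ) = (((n:ℝ)):ℂ) := by push_cast; ring
        rw [h4, Complex.norm_real, Real.norm_eq_abs]
      rw [e1, e2, e3]
      ring
    rw [hnum, hden]
    rw [div_eq_div_iff (by positivity) ?hne]
    · ring
    case hne =>
      have : (n:ℝ) ≠ 0 := Int.cast_ne_zero.mpr hn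
      have : |(n:ℝ)| ≠ 0 := abs_ne_zero.mpr this
      positivity
  rw [hnc]; ring

lemma tele {φ : ℤ → ℂ} {B : ℝ} (k : ℤ) (N : ℕ)
    (h : ∀ t : ℕ, t < N → ‖φ (k + t + 1) - φ (k + t)‖ ≤ B) :
    ‖φ (k + N) - φ k‖ ≤ N * B := by
  induction N with
  | zero => simp
  | succ N ih =>
    have ihh := ih fun t ht => h t (by omega)
    have h1 := h N (by omega)
    have key : φ (k + ((N:ℕ) + 1 : ℕ)) - φ k
        = (φ (k + N + 1) - φ (k + N)) + (φ (k + N) - φ k) := by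
      have harg : ((N + 1 : ℕ) : ℤ) = (N : ℤ) + 1 := by push_cast; ring
      rw [harg, ← add_assoc, sub_add_sub_cancel]
    calc ‖φ (k + ((N:ℕ) + 1 : ℕ)) - φ k‖
        = ‖(φ (k + N + 1) - φ (k + N)) + (φ (k + N) - φ k)‖ := by rw [key]
      _ ≤ ‖φ (k + N + 1) - φ (k + N)‖ + ‖φ (k + N) - φ k‖ := norm_add_le _ _
      _ ≤ B + N * B := add_le_add h1 ihh
      _ = ((N + 1 : ℕ) : ℝ) * B := by push_cast; ring

lemma fourierCoeff_decay {f : 𝕋 → ℂ} (hf : ContDiff ℝ (⊤:ℕ∞) fun x : ℝ => f x) (p : ℕ) :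
    ∃ M : ℝ, 0 ≤ M ∧ ∀ n : ℤ, n ≠ 0 → ‖fourierCoeff f n‖ ≤ M / |(n : ℝ)| ^ p := by
  induction p generalizing f with
  | zero =>
    have hc : Continuous f := continuous_tor hf.continuous
    obtain ⟨x₀, -, hx₀⟩ := isCompact_univ.exists_isMaxOn Set.univ_nonempty
      hc.norm.continuousOn
    exact ⟨‖f x₀‖, norm_nonneg _, fun n _ => by
      simpa using fourierCoeff_norm_le (fun y => hx₀ (Set.mem_univ y)) n⟩
  | succ p ih =>
    obtain ⟨g, hg, hstep⟩ := fourierCoeff_step hf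
    obtain ⟨M, hM0, hM⟩ := ih hg
    refine ⟨M, hM0, fun n hn => ?_⟩
    rw [hstep n hn]
    have h1 : (1:ℝ) ≤ |(n:ℝ)| := by
      have := Int.one_le_abs (by exact hn)
      calc (1:ℝ) ≤ ((|n| : ℤ) : ℝ) := by exact_mod_cast this
        _ = |(n:ℝ)| := by push_cast; ring
    have h0 : (0:ℝ) < |(n:ℝ)| := lt_of_lt_of_le zero_lt_one h1
    calc ‖fourierCoeff g n‖ / |(n:ℝ)| ≤ (M / |(n:ℝ)| ^ p) / |(n:ℝ)| := by
          gcongr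
          exact hM n hn
      _ = M / |(n:ℝ)| ^ (p + 1) := by rw [div_div, pow_succ]

lemma summable_weighted {f : 𝕋 → ℂ} (hf : ContDiff ℝ (⊤:ℕ∞) fun x : ℝ => f x) :
    Summable (fun n : ℤ => (1 + |(n : ℝ)|) * ‖fourierCoeff f n‖) := by
  obtain ⟨M, hM0, hM⟩ := fourierCoeff_decay hf 3
  refine Summable.of_norm_bounded_eventually (g := fun n : ℤ => 2 * M * (1 / (n:ℝ) ^ 2)) ?_ ?_
  · exact ((Real.summable_one_div_int_pow (p := 2)).mpr one_lt_two).mul_left _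
  · rw [Filter.eventually_cofinite]
    refine Set.Finite.subset (Set.finite_singleton (0:ℤ)) fun n hn => ?_
    simp only [Set.mem_setOf_eq, Set.mem_singleton_iff] at hn ⊢
    by_contra h0
    apply hn
    have h1 : (1:ℝ) ≤ |(n:ℝ)| := by
      have := Int.one_le_abs (by exact h0)
      calc (1:ℝ) ≤ ((|n| : ℤ) : ℝ) := by exact_mod_cast this
        _ = |(n:ℝ)| := by push_cast; ring
    have hpos : (0:ℝ) < |(n:ℝ)| := lt_of_lt_of_le zero_lt_one h1
    have hc0 : (0:ℝ) ≤ ‖fourierCoeff f n‖ := norm_nonneg _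
    have h2 := hM n h0
    have h3 : ‖(1 + |(n:ℝ)|) * ‖fourierCoeff f n‖‖ = (1 + |(n:ℝ)|) * ‖fourierCoeff f n‖ := by
      rw [Real.norm_eq_abs, _root_.abs_of_nonneg (by positivity)]
    rw [h3]
    calc (1 + |(n:ℝ)|) * ‖fourierCoeff f n‖
        ≤ (2 * |(n:ℝ)|) * (M / |(n:ℝ)| ^ 3) := by
          refine mul_le_mul (by linarith) h2 hc0 (by positivity)
      _ = 2 * M * (1 / (n:ℝ) ^ 2) := by
          have hn0 : (n:ℝ) ≠ 0 := Int.cast_ne_zero.mpr h0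
          have hanz : |(n:ℝ)| ≠ 0 := ne_of_gt hpos
          have habs : |(n:ℝ)| ^ 3 = (n:ℝ) ^ 2 * |(n:ℝ)| := by
            rw [pow_succ, _root_.sq_abs]
          rw [habs]
          field_simp

lemma fourierCoeff_translate (f : 𝕋 → ℂ) (a : 𝕋) (n : ℤ) :
    fourierCoeff (fun y : 𝕋 => f (y - a)) n = fourier (-n) a * fourierCoeff f n := by
  unfold fourierCoeff
  have key : ∫ t : 𝕋, fourier (-n) t • f (t - a) ∂haarT
      = ∫ t : 𝕋, fourier (-n) (t + a) • f t ∂haarT := by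
    have h := MeasureTheory.integral_add_right_eq_self (μ := haarT)
      (fun s : 𝕋 => fourier (-n) (s + a) • f s) (-a)
    rw [← h]
    refine MeasureTheory.integral_congr_ae (Filter.Eventually.of_forall fun t => ?_)
    simp only [sub_eq_add_neg, neg_add_cancel_right]
  rw [key]
  have h2 : ∫ t : 𝕋, fourier (-n) (t + a) • f t ∂haarT
      = fourier (-n) a • ∫ t : 𝕋, fourier (-n) t • f t ∂haarT := by
    rw [← MeasureTheory.integral_smul]
    refine MeasureTheory.integral_congr_ae (Filter.Eventually.of_forall fun t => ?_)
    simp only [smul_eq_mul, fourier_pt_add]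
    ring
  rw [h2, smul_eq_mul]


lemma fourierCoeff_modulate (f : 𝕋 → ℂ) (m n : ℤ) :
    fourierCoeff (fun y : 𝕋 => fourier m y * f y) n = fourierCoeff f (n - m) := by
  unfold fourierCoeff
  refine MeasureTheory.integral_congr_ae (Filter.Eventually.of_forall fun t => ?_)
  have hidx : -(n - m) = -n + m := by ring
  have h1 : fourier (-(n - m)) t = fourier (-n) t * fourier m t := by
    rw [hidx, fourier_add]
  simp only [smul_eq_mul, h1]
  ring

end Aux


set_option maxHeartbeats 1000000 in
theorem stmt12 (Λ : ℤ → ℝ) (μ₀ μ₁ μ : ℝ)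
    (hw : IsWeight Λ μ₀ μ₁) (hμ : μ₁ ≤ μ) (hde : WeightDiffEst Λ μ)
    (ρ : ℝ) (hρ₁ : 0 < ρ) (hρ₂ : ρ ≤ 1 / μ)
    (σ : 𝕋 → ℤ → ℂ) (hσ : MClass Λ ρ 0 σ)
    (kk : ℕ → ℤ) (hk : Tendsto (fun j => |kk j|) atTop atTop)
    (X : ℕ → 𝕋) (u : 𝕋 → ℂ) (hu : ContDiff ℝ (⊤ : ℕ∞) (fun x : ℝ => u x)) :
    Tendsto
      (fun j => eLpNorm
        (fun x : 𝕋 =>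
          σ x (kk j) * (fourier (kk j) x * u (x - X j)) -
            TOp σ (fun y => fourier (kk j) y * u (y - X j)) x) 2 haarT)
      atTop (nhds 0) := by
  classical
  obtain ⟨hμ₀pos, hμ01, hΛpos, C₀, hC₀, C₁, hC₁, hΛ⟩ := hw
  have hσ' := hσ 0 (by norm_num)
  obtain ⟨Cb, hCb, hCbnd⟩ := hσ'.2 0 0
  have hbnd : ∀ (x : 𝕋) (k : ℤ), ‖σ x k‖ ≤ Cb := by
    intro x k
    obtain ⟨y, rfl⟩ := QuotientAddGroup.mk_surjective x
    have h := hCbnd y k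
    simpa using h
  obtain ⟨Cd, hCd, hCdest⟩ := hσ'.2 1 0
  have hdiff : ∀ (x : 𝕋) (k : ℤ), ‖σ x (k + 1) - σ x k‖ ≤ Cd * Λ k ^ (-ρ) := by
    intro x k
    obtain ⟨y, rfl⟩ := QuotientAddGroup.mk_surjective x
    have h := hCdest y k
    simpa [fdiff] using h
  set κ : ℝ := ρ * μ₀ with hκdef
  have hκpos : 0 < κ := mul_pos hρ₁ hμ₀pos
  set C2 : ℝ := Cd * C₀ ^ (-ρ) with hC2def
  have hC2pos : 0 < C2 := by
    rw [hC2def]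
    have := Real.rpow_pos_of_pos hC₀ (-ρ)
    positivity
  have hlow : ∀ k : ℤ, Λ k ^ (-ρ) ≤ C₀ ^ (-ρ) * (1 + |(k:ℝ)|) ^ (-κ) := by
    intro k
    have hb : (0:ℝ) < C₀ * (1 + |(k:ℝ)|) ^ μ₀ := by positivity
    have h3 : Λ k ^ (-ρ) ≤ (C₀ * (1 + |(k:ℝ)|) ^ μ₀) ^ (-ρ) :=
      Real.rpow_le_rpow_of_nonpos hb (hΛ k).1 (neg_nonpos.mpr hρ₁.le)
    refine h3.trans_eq ?_
    rw [Real.mul_rpow hC₀.le (by positivity),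
      ← Real.rpow_mul (by positivity : (0:ℝ) ≤ 1 + |(k:ℝ)|)]
    congr 1
    rw [hκdef]; ring
  -- key difference estimate
  have hkey : ∀ (x : 𝕋) (m n : ℤ),
      ‖σ x (m + n) - σ x m‖
        ≤ C2 * |(n:ℝ)| * (1 + max (|(m:ℝ)| - |(n:ℝ)|) 0) ^ (-κ) := by
    intro x m n
    have hQ1 : (1:ℝ) ≤ 1 + max (|(m:ℝ)| - |(n:ℝ)|) 0 :=
      le_add_of_nonneg_right (le_max_right _ _)
    have hQ0 : (0:ℝ) < 1 + max (|(m:ℝ)| - |(n:ℝ)|) 0 := lt_of_lt_of_le one_pos hQ1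
    have hstepB : ∀ p : ℤ, |(m:ℝ)| - |(n:ℝ)| ≤ |(p:ℝ)| →
        ‖σ x (p + 1) - σ x p‖ ≤ C2 * (1 + max (|(m:ℝ)| - |(n:ℝ)|) 0) ^ (-κ) := by
      intro p hp
      have h1 := hdiff x p
      have h2 := hlow p
      have hQle : 1 + max (|(m:ℝ)| - |(n:ℝ)|) 0 ≤ 1 + |(p:ℝ)| := by
        have := max_le hp (abs_nonneg (p:ℝ))
        linarith
      have h3 : (1 + |(p:ℝ)|) ^ (-κ) ≤ (1 + max (|(m:ℝ)| - |(n:ℝ)|) 0) ^ (-κ) :=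
        Real.rpow_le_rpow_of_nonpos hQ0 hQle (neg_nonpos.mpr hκpos.le)
      have hC0r : (0:ℝ) < C₀ ^ (-ρ) := Real.rpow_pos_of_pos hC₀ _
      calc ‖σ x (p + 1) - σ x p‖ ≤ Cd * Λ p ^ (-ρ) := h1
        _ ≤ Cd * (C₀ ^ (-ρ) * (1 + |(p:ℝ)|) ^ (-κ)) :=
            mul_le_mul_of_nonneg_left h2 hCd.le
        _ ≤ Cd * (C₀ ^ (-ρ) * (1 + max (|(m:ℝ)| - |(n:ℝ)|) 0) ^ (-κ)) := by
            refine mul_le_mul_of_nonneg_left ?_ hCd.le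
            exact mul_le_mul_of_nonneg_left h3 hC0r.le
        _ = C2 * (1 + max (|(m:ℝ)| - |(n:ℝ)|) 0) ^ (-κ) := by rw [hC2def]; ring
    rcases le_or_gt 0 n with hn0 | hn0
    · obtain ⟨N, rfl⟩ : ∃ N : ℕ, (N : ℤ) = n := ⟨n.toNat, Int.toNat_of_nonneg hn0⟩
      have htel := tele (φ := fun t => σ x t) m N (fun t ht => by
        refine hstepB (m + t) ?_
        have h8 : |(m:ℝ)| ≤ |((m + (t:ℤ) : ℤ):ℝ)| + (t:ℝ) := by
          push_cast
          calc |(m:ℝ)| = |((m:ℝ) + (t:ℝ)) + (-(t:ℝ))| := by ring_nf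
            _ ≤ |(m:ℝ) + (t:ℝ)| + |(-(t:ℝ))| := abs_add_le _ _
            _ = |(m:ℝ) + (t:ℝ)| + (t:ℝ) := by
                rw [abs_neg]
                congr 1
                exact _root_.abs_of_nonneg (Nat.cast_nonneg t)
        have h9 : (t:ℝ) ≤ |((N:ℤ):ℝ)| := by
          have h10 : ((N:ℤ):ℝ) = (N:ℝ) := by push_cast; ring
          rw [h10, _root_.abs_of_nonneg (Nat.cast_nonneg N)]
          exact_mod_cast ht.le
        linarith)
      refine htel.trans_eq ?_
      have hcast : ((N:ℤ):ℝ) = (N:ℝ) := by push_cast; ring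
      have hNa : |(N:ℝ)| = (N:ℝ) := _root_.abs_of_nonneg (Nat.cast_nonneg N)
      rw [hcast, hNa]
      ring
    · set N : ℕ := (-n).toNat with hNset
      have hNn : (N:ℤ) = -n := Int.toNat_of_nonneg (by omega)
      have htel := tele (φ := fun t => σ x t) (m + n) N (fun t ht => by
        refine hstepB (m + n + t) ?_
        have hnr : (n:ℝ) < 0 := by exact_mod_cast hn0
        have htn : (t:ℝ) < -(n:ℝ) := by
          have h11 : (t:ℤ) < -n := by omega
          exact_mod_cast h11
        have hb1 : |(m:ℝ)| ≤ |((m + n + (t:ℤ) : ℤ):ℝ)| + |(n:ℝ) + (t:ℝ)| := by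
          push_cast
          calc |(m:ℝ)| = |((m:ℝ) + (n:ℝ) + (t:ℝ)) + (-((n:ℝ) + (t:ℝ)))| := by ring_nf
            _ ≤ |(m:ℝ) + (n:ℝ) + (t:ℝ)| + |(-((n:ℝ) + (t:ℝ)))| := abs_add_le _ _
            _ = |(m:ℝ) + (n:ℝ) + (t:ℝ)| + |(n:ℝ) + (t:ℝ)| := by rw [abs_neg]
        have hb2 : |(n:ℝ) + (t:ℝ)| ≤ |(n:ℝ)| := by
          have ht0 : (0:ℝ) ≤ (t:ℝ) := Nat.cast_nonneg t
          rw [_root_.abs_of_nonpos (by linarith : (n:ℝ) + (t:ℝ) ≤ 0),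
            _root_.abs_of_neg hnr]
          linarith
        linarith)
      have harg : m + n + (N:ℤ) = m := by omega
      rw [harg] at htel
      have habs : |(n:ℝ)| = (N:ℝ) := by
        have h12 : ((N:ℤ):ℝ) = -(n:ℝ) := by exact_mod_cast hNn
        have hnr : (n:ℝ) < 0 := by exact_mod_cast hn0
        rw [_root_.abs_of_neg hnr]
        have : ((N:ℤ):ℝ) = (N:ℝ) := by push_cast; ring
        linarith [this ▸ h12]
      calc ‖σ x (m + n) - σ x m‖ = ‖σ x m - σ x (m + n)‖ := norm_sub_rev _ _
        _ ≤ (N:ℝ) * (C2 * (1 + max (|(m:ℝ)| - |(n:ℝ)|) 0) ^ (-κ)) := htel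
        _ = C2 * |(n:ℝ)| * (1 + max (|(m:ℝ)| - |(n:ℝ)|) 0) ^ (-κ) := by
            rw [habs]; ring
  -- summability of Fourier coefficients of u
  have hu' : ContDiff ℝ (⊤:ℕ∞) fun x : ℝ => u x := hu.of_le (by simp)
  have hsumW := summable_weighted hu'
  have hsum1 : Summable (fun n : ℤ => ‖fourierCoeff u n‖) :=
    Summable.of_nonneg_of_le (fun n => norm_nonneg _)
      (fun n => le_mul_of_one_le_left (norm_nonneg _)
        (by linarith [abs_nonneg ((n:ℝ))])) hsumW
  -- the dominating sequence
  set W : ℕ → ℤ → ℝ := fun j n =>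
    C2 * |(n:ℝ)| * (1 + max (|((kk j):ℝ)| - |(n:ℝ)|) 0) ^ (-κ) * ‖fourierCoeff u n‖
    with hWdef
  set bnd : ℤ → ℝ := fun n => C2 * ((1 + |(n:ℝ)|) * ‖fourierCoeff u n‖) with hbnddef
  have hbnd_sum : Summable bnd := hsumW.mul_left C2
  have hQ1' : ∀ (j : ℕ) (n : ℤ), (1:ℝ) ≤ 1 + max (|((kk j):ℝ)| - |(n:ℝ)|) 0 :=
    fun j n => le_add_of_nonneg_right (le_max_right _ _)
  have hWnonneg : ∀ j n, 0 ≤ W j n := by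
    intro j n
    simp only [hWdef]
    have := Real.rpow_pos_of_pos (lt_of_lt_of_le one_pos (hQ1' j n)) (-κ)
    positivity
  have hWle : ∀ j n, W j n ≤ bnd n := by
    intro j n
    simp only [hWdef, hbnddef]
    have h1 : (1 + max (|((kk j):ℝ)| - |(n:ℝ)|) 0) ^ (-κ) ≤ 1 :=
      Real.rpow_le_one_of_one_le_of_nonpos (hQ1' j n) (neg_nonpos.mpr hκpos.le)
    have h2 : (0:ℝ) < (1 + max (|((kk j):ℝ)| - |(n:ℝ)|) 0) ^ (-κ) :=
      Real.rpow_pos_of_pos (lt_of_lt_of_le one_pos (hQ1' j n)) (-κ)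
    have h3 : |(n:ℝ)| ≤ 1 + |(n:ℝ)| := by linarith
    calc C2 * |(n:ℝ)| * (1 + max (|((kk j):ℝ)| - |(n:ℝ)|) 0) ^ (-κ) * ‖fourierCoeff u n‖
        ≤ C2 * |(n:ℝ)| * 1 * ‖fourierCoeff u n‖ := by
          refine mul_le_mul_of_nonneg_right ?_ (norm_nonneg _)
          refine mul_le_mul_of_nonneg_left h1 ?_
          positivity
      _ ≤ C2 * (1 + |(n:ℝ)|) * ‖fourierCoeff u n‖ := by
          refine mul_le_mul_of_nonneg_right ?_ (norm_nonneg _)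
          rw [mul_one]
          exact mul_le_mul_of_nonneg_left h3 hC2pos.le
      _ = C2 * ((1 + |(n:ℝ)|) * ‖fourierCoeff u n‖) := by ring
  have hW_sum : ∀ j, Summable (W j) := fun j =>
    Summable.of_nonneg_of_le (hWnonneg j) (hWle j) hbnd_sum
  set S : ℕ → ℝ := fun j => ∑' n : ℤ, W j n with hSdef
  -- S tends to 0
  have hA_tend : Tendsto (fun j => |((kk j):ℝ)|) atTop atTop := by
    have h1 : Tendsto (fun j => ((|kk j| : ℤ) : ℝ)) atTop atTop :=
      tendsto_intCast_atTop_atTop.comp hk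
    refine h1.congr fun j => ?_
    push_cast
    ring
  have hS0 : Tendsto S atTop (nhds 0) := by
    have hterm : ∀ n : ℤ, Tendsto (fun j => W j n) atTop (nhds 0) := by
      intro n
      have h2a : Tendsto (fun j => |((kk j):ℝ)| - |(n:ℝ)|) atTop atTop :=
        (tendsto_atTop_add_const_right atTop (-|(n:ℝ)|) hA_tend).congr fun j => by ring
      have h2 : Tendsto (fun j => 1 + max (|((kk j):ℝ)| - |(n:ℝ)|) 0) atTop atTop := by
        refine tendsto_atTop_mono (fun j => ?_)
          (tendsto_atTop_add_const_left atTop 1 h2a)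
        exact add_le_add le_rfl (le_max_left _ _)
      have h3 : Tendsto (fun j => (1 + max (|((kk j):ℝ)| - |(n:ℝ)|) 0) ^ (-κ))
          atTop (nhds 0) := (tendsto_rpow_neg_atTop hκpos).comp h2
      have h4 := (h3.const_mul (C2 * |(n:ℝ)|)).mul_const ‖fourierCoeff u n‖
      simp only [hWdef]
      simpa using h4
    have hdom : ∀ᶠ j in atTop, ∀ n : ℤ, ‖W j n‖ ≤ bnd n :=
      Filter.Eventually.of_forall fun j n => by
        rw [Real.norm_eq_abs, _root_.abs_of_nonneg (hWnonneg j n)]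
        exact hWle j n
    have h5 := tendsto_tsum_of_dominated_convergence (f := W) (g := fun _ => (0:ℝ))
      hbnd_sum hterm hdom
    simp only [hSdef]
    simpa using h5
  -- pointwise bound
  have hmain : ∀ j, eLpNorm
      (fun x : 𝕋 =>
        σ x (kk j) * (fourier (kk j) x * u (x - X j)) -
          TOp σ (fun y => fourier (kk j) y * u (y - X j)) x) 2 haarT
      ≤ ENNReal.ofReal (S j) := by
    intro j
    have hp : ∀ x : 𝕋,
        ‖σ x (kk j) * (fourier (kk j) x * u (x - X j)) -
          TOp σ (fun y => fourier (kk j) y * u (y - X j)) x‖ ≤ S j := by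
      intro x
      set v : 𝕋 → ℂ := fun y => fourier (kk j) y * u (y - X j) with hvdef
      have hvc : Continuous v := by
        simp only [hvdef]
        exact ((fourier (kk j)).continuous).mul
          ((continuous_tor hu'.continuous).comp (continuous_id.sub continuous_const))
      have hcoef : ∀ k : ℤ,
          fourierCoeff v k = fourier (-(k - kk j)) (X j) * fourierCoeff u (k - kk j) := by
        intro k
        have h1 : fourierCoeff v k = fourierCoeff (fun y : 𝕋 => u (y - X j)) (k - kk j) :=
          fourierCoeff_modulate (fun y => u (y - X j)) (kk j) k
        rw [h1, fourierCoeff_translate]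
      have hnorm : ∀ k : ℤ, ‖fourierCoeff v k‖ = ‖fourierCoeff u (k - kk j)‖ := fun k => by
        rw [hcoef k, norm_mul, norm_fourier_apply, one_mul]
      let e : ℤ ≃ ℤ :=
        ⟨fun k => k - kk j, fun k => k + kk j, fun k => by ring, fun k => by ring⟩
      have he : ∀ k, e k = k - kk j := fun k => rfl
      have hsumtrans : Summable (fun k : ℤ => ‖fourierCoeff u (k - kk j)‖) := by
        have h := (e.summable_iff (f := fun n : ℤ => ‖fourierCoeff u n‖)).mpr hsum1
        refine h.congr fun k => ?_
        simp [Function.comp, he]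
      have hsv : Summable (fourierCoeff v) :=
        Summable.of_norm (hsumtrans.congr fun k => (hnorm k).symm)
      have hV : HasSum (fun k : ℤ => fourierCoeff v k • fourier k x) (v x) :=
        has_pointwise_sum_fourier_series_of_summable
          (f := ContinuousMap.mk v hvc) hsv x
      have h1 : HasSum (fun k : ℤ => σ x (kk j) * (fourierCoeff v k • fourier k x))
          (σ x (kk j) * v x) := hV.mul_left _
      have hsT : Summable (fun k : ℤ => fourier k x * σ x k * fourierCoeff v k) := by
        refine Summable.of_norm_bounded (g := fun k => Cb * ‖fourierCoeff u (k - kk j)‖)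
          (hsumtrans.mul_left Cb) fun k => ?_
        rw [norm_mul, norm_mul, norm_fourier_apply, one_mul, hnorm k]
        exact mul_le_mul_of_nonneg_right (hbnd x k) (norm_nonneg _)
      have h2 : HasSum (fun k : ℤ => fourier k x * σ x k * fourierCoeff v k)
          (TOp σ v x) := by
        unfold TOp
        exact hsT.hasSum
      have h3 := h1.sub h2
      have hEq : (fun k : ℤ => (σ x (kk j) - σ x k) * fourierCoeff v k * fourier k x)
          = fun k : ℤ => σ x (kk j) * (fourierCoeff v k • fourier k x)
            - fourier k x * σ x k * fourierCoeff v k := by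
        funext k
        simp only [smul_eq_mul]
        ring
      have h3' : HasSum (fun k : ℤ => (σ x (kk j) - σ x k) * fourierCoeff v k * fourier k x)
          (σ x (kk j) * v x - TOp σ v x) := by
        rw [hEq]
        exact h3
      have hwb : ∀ k : ℤ,
          ‖(σ x (kk j) - σ x k) * fourierCoeff v k * fourier k x‖ ≤ W j (k - kk j) := by
        intro k
        rw [norm_mul, norm_mul, norm_fourier_apply, mul_one, hnorm k]
        have h6 : ‖σ x (kk j) - σ x k‖ = ‖σ x (kk j + (k - kk j)) - σ x (kk j)‖ := by
          have harg : kk j + (k - kk j) = k := by ring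
          rw [harg, norm_sub_rev]
        rw [h6]
        simp only [hWdef]
        exact mul_le_mul_of_nonneg_right (hkey x (kk j) (k - kk j)) (norm_nonneg _)
      have hWtrans : Summable (fun k : ℤ => W j (k - kk j)) := by
        have h := (e.summable_iff (f := W j)).mpr (hW_sum j)
        refine h.congr fun k => ?_
        simp [Function.comp, he]
      have hnsum : Summable
          (fun k : ℤ => ‖(σ x (kk j) - σ x k) * fourierCoeff v k * fourier k x‖) :=
        Summable.of_nonneg_of_le (fun k => norm_nonneg _) hwb hWtrans
      have hfinal : ‖σ x (kk j) * v x - TOp σ v x‖ ≤ S j := by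
        calc ‖σ x (kk j) * v x - TOp σ v x‖
            = ‖∑' k : ℤ, (σ x (kk j) - σ x k) * fourierCoeff v k * fourier k x‖ := by
              rw [h3'.tsum_eq]
          _ ≤ ∑' k : ℤ, ‖(σ x (kk j) - σ x k) * fourierCoeff v k * fourier k x‖ :=
              norm_tsum_le_tsum_norm hnsum
          _ ≤ ∑' k : ℤ, W j (k - kk j) := Summable.tsum_le_tsum hwb hnsum hWtrans
          _ = ∑' n : ℤ, W j n := by
              have h := e.tsum_eq (W j)
              refine Eq.trans ?_ h
              exact tsum_congr fun k => by rw [he]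
          _ = S j := by simp only [hSdef]
      exact hfinal
    have h5 := MeasureTheory.eLpNorm_le_of_ae_bound (μ := haarT) (p := 2)
      (Filter.Eventually.of_forall hp)
    simpa [measure_univ] using h5
  have hupper : Tendsto (fun j => ENNReal.ofReal (S j)) atTop (nhds 0) := by
    have := ENNReal.tendsto_ofReal hS0
    simpa using this
  exact tendsto_of_tendsto_of_tendsto_of_le_of_le tendsto_const_nhds hupper
    (fun j => zero_le) hmain
end
end
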